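/- Let K > 0 and let F_K : ℝ³ → ℝ⁴ be the chart map of the parametric cubic model ∂[-K,K]⁴ of S³, defined by F_K(x) = (K, x)/√(K² + ‖x‖₂²). For every x ∈ ℝ³ with ‖x‖_∞ ≤ K and every v ∈ ℝ³, the derivative of F_K satisfies (1/(4K))·‖v‖₂ ≤ ‖DF_K(x)(v)‖₂ ≤ (1/K)·‖v‖₂. -/

import Mathlib

open scoped InnerProductSpace

/-- The sup norm of a point of Euclidean space (the `ℓ^∞` norm). -/
noncomputable def supNorm {m : ℕ} (q : EuclideanSpace ℝ (Fin m)) : ℝ :=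
  ‖(EuclideanSpace.equiv (Fin m) ℝ) q‖

/-- The chart map `F_K : ℝ³ → ℝ⁴` of the parametric cubic model `∂[-K,K]⁴` of `S³`:
`F_K(x) = (K, x) / √(K² + ‖x‖₂²)`. -/
noncomputable def chartMapK (K : ℝ) (x : EuclideanSpace ℝ (Fin 3)) :
    EuclideanSpace ℝ (Fin 4) :=
  (Real.sqrt (K ^ 2 + ‖x‖ ^ 2))⁻¹ •
    (EuclideanSpace.equiv (Fin 4) ℝ).symm (Fin.cons K ((EuclideanSpace.equiv (Fin 3) ℝ) x))

noncomputable def consLM : (Fin 3 → ℝ) →ₗ[ℝ] (Fin 4 → ℝ) where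
  toFun f := Fin.cons 0 f
  map_add' a b := by ext i; refine Fin.cases ?_ (fun j => ?_) i <;> simp
  map_smul' c a := by ext i; refine Fin.cases ?_ (fun j => ?_) i <;> simp

noncomputable def L3 : EuclideanSpace ℝ (Fin 3) →L[ℝ] EuclideanSpace ℝ (Fin 4) :=
  (((EuclideanSpace.equiv (Fin 4) ℝ).symm.toContinuousLinearMap.comp
    consLM.toContinuousLinearMap).comp
    (EuclideanSpace.equiv (Fin 3) ℝ).toContinuousLinearMap)

noncomputable def cvec (K : ℝ) (x : EuclideanSpace ℝ (Fin 3)) : EuclideanSpace ℝ (Fin 4) :=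
  (EuclideanSpace.equiv (Fin 4) ℝ).symm (Fin.cons K ((EuclideanSpace.equiv (Fin 3) ℝ) x))

lemma inner3 (x v : EuclideanSpace ℝ (Fin 3)) : ⟪x, v⟫_ℝ = ∑ i, x i * v i := by
  rw [PiLp.inner_apply]; simp [RCLike.inner_apply]
  exact Finset.sum_congr rfl (fun i _ => mul_comm _ _)

lemma inner_cc (K : ℝ) (x : EuclideanSpace ℝ (Fin 3)) :
    ⟪cvec K x, cvec K x⟫_ℝ = K ^ 2 + ‖x‖ ^ 2 := by
  rw [cvec, PiLp.inner_apply, Fin.sum_univ_succ]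
  simp only [Fin.cons_zero, Fin.cons_succ, EuclideanSpace.equiv, WithLp.linearEquiv_symm_apply, ContinuousLinearEquiv.coe_mk, LinearEquiv.coe_symm_mk', PiLp.continuousLinearEquiv_symm_apply, PiLp.continuousLinearEquiv_apply, Fin.cons_zero, Fin.cons_succ]
  have h := inner3 x x
  rw [real_inner_self_eq_norm_sq] at h
  simp [← h]; rw [h]; simp only [sq]

lemma inner_cL (K : ℝ) (x v : EuclideanSpace ℝ (Fin 3)) :
    ⟪cvec K x, L3 v⟫_ℝ = ⟪x, v⟫_ℝ := by
  rw [cvec, PiLp.inner_apply, Fin.sum_univ_succ, inner3]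
  show _ = ∑ i : Fin 3, x i * v i
  simp [L3, consLM, Fin.cons_zero, Fin.cons_succ]
  exact Finset.sum_congr rfl (fun i _ => mul_comm _ _)

lemma inner_LL (u v : EuclideanSpace ℝ (Fin 3)) : ⟪L3 u, L3 v⟫_ℝ = ⟪u, v⟫_ℝ := by
  rw [PiLp.inner_apply, Fin.sum_univ_succ, inner3]
  show _ = ∑ i : Fin 3, u i * v i
  simp [L3, consLM, Fin.cons_zero, Fin.cons_succ]
  exact Finset.sum_congr rfl (fun i _ => mul_comm _ _)

lemma cvec_eq (K : ℝ) (y : EuclideanSpace ℝ (Fin 3)) :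
    cvec K y = cvec K 0 + L3 y := by
  show cvec K y = cvec K 0 + (EuclideanSpace.equiv (Fin 4) ℝ).symm
    (Fin.cons 0 ((EuclideanSpace.equiv (Fin 3) ℝ) y))
  rw [cvec, cvec, ← map_add]
  congr 1
  ext i
  refine Fin.cases ?_ (fun j => ?_) i <;> simp

lemma chart_hasFDerivAt (K : ℝ) (hK : 0 < K) (x : EuclideanSpace ℝ (Fin 3)) :
    HasFDerivAt (chartMapK K)
      (((Real.sqrt (K^2 + ‖x‖^2))⁻¹ • L3) +
        ((-(1/(2 * Real.sqrt (K^2+‖x‖^2))) / (Real.sqrt (K^2+‖x‖^2))^2) •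
          ((fderivInnerCLM ℝ (x, x)).comp ((ContinuousLinearMap.id ℝ _).prod
            (ContinuousLinearMap.id ℝ _)))).smulRight (cvec K x)) x := by
  have hpos : (0:ℝ) < K ^ 2 + ‖x‖ ^ 2 := by positivity
  have hinner : ⟪x, x⟫_ℝ = ‖x‖ ^ 2 := real_inner_self_eq_norm_sq x
  -- derivative of y ↦ ⟪y, y⟫
  have hs : HasFDerivAt (fun y : EuclideanSpace ℝ (Fin 3) => ⟪y, y⟫_ℝ)
      ((fderivInnerCLM ℝ (x, x)).comp ((ContinuousLinearMap.id ℝ _).prod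
        (ContinuousLinearMap.id ℝ _))) x :=
    (hasFDerivAt_id x).inner (𝕜 := ℝ) (hasFDerivAt_id x)
  -- derivative of t ↦ (√(K² + t))⁻¹ at ⟪x, x⟫
  have hne : K ^ 2 + ⟪x, x⟫_ℝ ≠ 0 := by rw [hinner]; exact ne_of_gt hpos
  have hsqrt : HasDerivAt (fun t : ℝ => Real.sqrt (K ^ 2 + t))
      (1 / (2 * Real.sqrt (K ^ 2 + ⟪x, x⟫_ℝ))) (⟪x, x⟫_ℝ) := by
    have h0 : HasDerivAt (fun t : ℝ => K ^ 2 + t) 1 (⟪x, x⟫_ℝ) :=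
      (hasDerivAt_id _).const_add (K ^ 2)
    simpa using h0.sqrt hne
  have hψ : HasDerivAt (fun t : ℝ => (Real.sqrt (K ^ 2 + t))⁻¹)
      (-(1 / (2 * Real.sqrt (K ^ 2 + ‖x‖ ^ 2))) / (Real.sqrt (K ^ 2 + ‖x‖ ^ 2)) ^ 2)
      (⟪x, x⟫_ℝ) := by
    have h := hsqrt.inv (Real.sqrt_ne_zero'.2 (by rw [hinner]; exact hpos))
    rw [hinner]
    rw [hinner] at h
    exact h
  have hφ : HasFDerivAt (fun y : EuclideanSpace ℝ (Fin 3) => (Real.sqrt (K ^ 2 + ‖y‖ ^ 2))⁻¹)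
      ((-(1 / (2 * Real.sqrt (K ^ 2 + ‖x‖ ^ 2))) / (Real.sqrt (K ^ 2 + ‖x‖ ^ 2)) ^ 2) •
        ((fderivInnerCLM ℝ (x, x)).comp ((ContinuousLinearMap.id ℝ _).prod
          (ContinuousLinearMap.id ℝ _)))) x := by
    have := HasDerivAt.comp_hasFDerivAt (f := fun y : EuclideanSpace ℝ (Fin 3) => ⟪y, y⟫_ℝ) x hψ hs
    have heq : ((fun t : ℝ => (Real.sqrt (K ^ 2 + t))⁻¹) ∘ fun y : EuclideanSpace ℝ (Fin 3) => ⟪y, y⟫_ℝ)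
        = fun y : EuclideanSpace ℝ (Fin 3) => (Real.sqrt (K ^ 2 + ‖y‖ ^ 2))⁻¹ := by
      funext y
      simp only [Function.comp]
      rw [real_inner_self_eq_norm_sq]
    rwa [heq] at this
  have hc : HasFDerivAt (cvec K) L3 x := by
    have h1 : HasFDerivAt (fun y : EuclideanSpace ℝ (Fin 3) => cvec K 0 + L3 y) L3 x :=
      (L3.hasFDerivAt).const_add (cvec K 0)
    have h2 : (fun y : EuclideanSpace ℝ (Fin 3) => cvec K 0 + L3 y) = cvec K := by
      funext y; rw [cvec_eq K y]
    rwa [h2] at h1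
  have := hφ.smul hc
  have hfun : (fun y : EuclideanSpace ℝ (Fin 3) =>
      (Real.sqrt (K ^ 2 + ‖y‖ ^ 2))⁻¹ • cvec K y) = chartMapK K := rfl
  exact this

lemma norm_sq_le (K : ℝ) (hK : 0 < K) (x : EuclideanSpace ℝ (Fin 3)) (hx : supNorm x ≤ K) :
    ‖x‖ ^ 2 ≤ 3 * K ^ 2 := by
  have h0 : ‖((EuclideanSpace.equiv (Fin 3) ℝ) x) 0‖ ≤ supNorm x := norm_le_pi_norm _ 0
  have h1 : ‖((EuclideanSpace.equiv (Fin 3) ℝ) x) 1‖ ≤ supNorm x := norm_le_pi_norm _ 1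
  have h2 : ‖((EuclideanSpace.equiv (Fin 3) ℝ) x) 2‖ ≤ supNorm x := norm_le_pi_norm _ 2
  have hnorm : ‖x‖ ^ 2 = ‖x 0‖ ^ 2 + ‖x 1‖ ^ 2 + ‖x 2‖ ^ 2 := by
    rw [EuclideanSpace.norm_eq, Real.sq_sqrt (by positivity)]
    rw [Fin.sum_univ_three]
  have e0 : ((EuclideanSpace.equiv (Fin 3) ℝ) x) 0 = x 0 := rfl
  have e1 : ((EuclideanSpace.equiv (Fin 3) ℝ) x) 1 = x 1 := rfl
  have e2 : ((EuclideanSpace.equiv (Fin 3) ℝ) x) 2 = x 2 := rfl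
  rw [e0] at h0; rw [e1] at h1; rw [e2] at h2
  have n0 : (0:ℝ) ≤ ‖x 0‖ := norm_nonneg _
  have n1 : (0:ℝ) ≤ ‖x 1‖ := norm_nonneg _
  have n2 : (0:ℝ) ≤ ‖x 2‖ := norm_nonneg _
  nlinarith [h0.trans hx, h1.trans hx, h2.trans hx]

set_option maxHeartbeats 1000000 in
/-- For `K > 0`, every `x` in the cube `[-K,K]³` (i.e. `‖x‖_∞ ≤ K`) and every
`v ∈ ℝ³`, the derivative of `F_K` satisfies
`(1/(4K))·‖v‖₂ ≤ ‖DF_K(x)(v)‖₂ ≤ (1/K)·‖v‖₂`. -/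
theorem chartMapK_fderiv_bounds (K : ℝ) (hK : 0 < K)
    (x : EuclideanSpace ℝ (Fin 3)) (hx : supNorm x ≤ K) (v : EuclideanSpace ℝ (Fin 3)) :
    (1 / (4 * K)) * ‖v‖ ≤ ‖fderiv ℝ (chartMapK K) x v‖ ∧
    ‖fderiv ℝ (chartMapK K) x v‖ ≤ (1 / K) * ‖v‖ := by
  have hpos : (0:ℝ) < K ^ 2 + ‖x‖ ^ 2 := by positivity
  set n := Real.sqrt (K ^ 2 + ‖x‖ ^ 2) with hndef
  have hnpos : 0 < n := Real.sqrt_pos.2 hpos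
  have hn2 : n ^ 2 = K ^ 2 + ‖x‖ ^ 2 := Real.sq_sqrt hpos.le
  have hD := chart_hasFDerivAt K hK x
  rw [hD.fderiv]
  set p := ⟪x, v⟫_ℝ with hpdef
  set b : ℝ := -(1 / (2 * n)) / n ^ 2 * (p + p) with hbdef
  have hDv : ((n⁻¹ • L3) +
        ((-(1/(2 * n)) / n ^ 2) •
          ((fderivInnerCLM ℝ (x, x)).comp ((ContinuousLinearMap.id ℝ _).prod
            (ContinuousLinearMap.id ℝ _)))).smulRight (cvec K x)) v
      = n⁻¹ • L3 v + b • cvec K x := by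
    simp only [ContinuousLinearMap.add_apply, ContinuousLinearMap.smul_apply,
      ContinuousLinearMap.smulRight_apply, ContinuousLinearMap.coe_comp', Function.comp_apply,
      ContinuousLinearMap.prod_apply, ContinuousLinearMap.coe_id', id_eq,
      fderivInnerCLM_apply, smul_eq_mul, hbdef]
    rw [real_inner_comm x v, ← hpdef]
  rw [hDv]
  set w := n⁻¹ • L3 v + b • cvec K x with hwdef
  have hsq : ‖w‖ ^ 2 = n⁻¹ ^ 2 * ‖v‖ ^ 2 + 2 * n⁻¹ * b * p + b ^ 2 * n ^ 2 := by
    rw [← real_inner_self_eq_norm_sq, hwdef, real_inner_add_add_self]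
    rw [real_inner_smul_left, real_inner_smul_right, real_inner_smul_left,
      real_inner_smul_right, real_inner_smul_left, real_inner_smul_right]
    rw [inner_LL, inner_cc, real_inner_comm (cvec K x) (L3 v), inner_cL]
    rw [real_inner_self_eq_norm_sq, ← hpdef, ← hn2]
    ring
  have hb : b = -p / n ^ 3 := by
    rw [hbdef]; field_simp; ring
  have key : ‖w‖ ^ 2 * n ^ 4 = n ^ 2 * ‖v‖ ^ 2 - p ^ 2 := by
    rw [hsq, hb]; field_simp; ring
  have hp2 : p ^ 2 ≤ ‖x‖ ^ 2 * ‖v‖ ^ 2 := by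
    have h := abs_real_inner_le_norm x v
    nlinarith [abs_nonneg p, sq_abs p, norm_nonneg x, norm_nonneg v]
  have hx2 : ‖x‖ ^ 2 ≤ 3 * K ^ 2 := norm_sq_le K hK x hx
  have hK2n : K ^ 2 ≤ n ^ 2 := by nlinarith [sq_nonneg ‖x‖]
  have hn4K : n ^ 2 ≤ 4 * K ^ 2 := by nlinarith
  have hwnn : (0:ℝ) ≤ ‖w‖ := norm_nonneg w
  have hsub : n ^ 2 * ‖v‖ ^ 2 = K ^ 2 * ‖v‖ ^ 2 + ‖x‖ ^ 2 * ‖v‖ ^ 2 := by rw [hn2]; ring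
  constructor
  · -- lower bound
    have l1 : K ^ 2 * ‖v‖ ^ 2 ≤ ‖w‖ ^ 2 * n ^ 4 := by linarith [key, hp2, hsub]
    have ln4 : n ^ 4 ≤ 16 * K ^ 4 := by
      nlinarith [mul_nonneg (sub_nonneg.2 hn4K) (by positivity : (0:ℝ) ≤ 4 * K ^ 2 + n ^ 2)]
    have l2 : ‖w‖ ^ 2 * n ^ 4 ≤ ‖w‖ ^ 2 * (16 * K ^ 4) :=
      mul_le_mul_of_nonneg_left ln4 (sq_nonneg ‖w‖)
    have l3 : ‖v‖ ^ 2 ≤ 16 * K ^ 2 * ‖w‖ ^ 2 := by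
      have hKp : (0:ℝ) < K ^ 2 := by positivity
      nlinarith [l1, l2]
    have l4 : (1 / (4 * K) * ‖v‖) ^ 2 ≤ ‖w‖ ^ 2 := by
      rw [mul_pow, div_pow, one_pow]
      rw [div_mul_eq_mul_div, one_mul, div_le_iff₀ (by positivity)]
      calc ‖v‖ ^ 2 ≤ 16 * K ^ 2 * ‖w‖ ^ 2 := l3
        _ = ‖w‖ ^ 2 * (4 * K) ^ 2 := by ring
    exact le_of_pow_le_pow_left₀ two_ne_zero hwnn l4
  · -- upper bound
    have u1 : ‖w‖ ^ 2 * n ^ 4 ≤ n ^ 2 * ‖v‖ ^ 2 := by nlinarith [sq_nonneg p]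
    have u2 : ‖w‖ ^ 2 * K ^ 2 ≤ ‖v‖ ^ 2 := by
      nlinarith [mul_nonneg (sq_nonneg ‖w‖) (sub_nonneg.2 hK2n),
        mul_nonneg (mul_nonneg (sq_nonneg ‖w‖) (sub_nonneg.2 hK2n))
          (by positivity : (0:ℝ) ≤ K ^ 2 + n ^ 2), sq_nonneg ‖v‖, hK2n]
    have u3 : ‖w‖ ^ 2 ≤ (1 / K * ‖v‖) ^ 2 := by
      rw [mul_pow, div_pow, one_pow]
      rw [div_mul_eq_mul_div, le_div_iff₀ (by positivity)]
      linarith [u2]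
    exact le_of_pow_le_pow_left₀ two_ne_zero (by positivity) u3
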